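/- arXiv:2307.09467 — 5 statements merged into one kernel-verified Lean document; each statement's English description precedes it below -/
import Mathlib

section
/- The rule F_{1,p} satisfies p-disjoint equality: for disjoint ballots b and b', F_{1,p}(θ_p^b + θ_p^{b'}) = {{c} : c ∈ b ∪ b'}. -/
open scoped ENNReal BigOperators

/-- Normalizer `|b|^{1/p}` for `p ∈ [1,∞]` (for `p = ∞` this is `|b|^0 = 1`). -/
noncomputable def wt (p : ℝ≥0∞) (card : ℕ) : ℝ := (card : ℝ) ^ (1 / p).toReal

/-- Score of candidate `c` under profile `π`: `Σ_b π(b)·1[c∈b]/|b|^{1/p}`. -/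
noncomputable def score {C : Type*} [Fintype C] [DecidableEq C]
    (p : ℝ≥0∞) (π : Finset C → ℝ) (c : C) : ℝ :=
  ∑ b : Finset C, if c ∈ b then π b / wt p b.card else 0

/-- `F_{k,p}(π)`: size-`k` committees maximizing the total score of their members. -/
noncomputable def Fkp {C : Type*} [Fintype C] [DecidableEq C]
    (k : ℕ) (p : ℝ≥0∞) (π : Finset C → ℝ) : Set (Finset C) :=
  {K | K.card = k ∧ ∀ K' : Finset C, K'.card = k →
    ∑ c ∈ K', score p π c ≤ ∑ c ∈ K, score p π c}

/-- A profile assigns nonnegative reals to ballots (nonempty subsets of `C`),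
with value `0` on the empty set. -/
def IsProfile {C : Type*} (π : Finset C → ℝ) : Prop :=
  (∀ b, 0 ≤ π b) ∧ π ∅ = 0

/-- The single-ballot profile `π^b`. -/
noncomputable def singleProfile {C : Type*} [DecidableEq C] (b : Finset C) : Finset C → ℝ :=
  fun b' => if b' = b then 1 else 0

/-- The unit score ballot profile `θ_p^b = |b|^{1/p} · π^b`. -/
noncomputable def theta {C : Type*} [DecidableEq C] (p : ℝ≥0∞) (b : Finset C) :
    Finset C → ℝ :=
  fun b' => if b' = b then wt p b.card else 0

/-- Consistency of a voting rule. -/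
def Consistent {C : Type*} (F : (Finset C → ℝ) → Set (Finset C)) : Prop :=
  ∀ π π' : Finset C → ℝ, IsProfile π → IsProfile π' →
    (F π ∩ F π').Nonempty → F (π + π') = F π ∩ F π'

/-- `p`-cancellation of a voting rule (with committee size `k`). -/
def Cancellative {C : Type*} [Fintype C] [DecidableEq C]
    (k : ℕ) (p : ℝ≥0∞) (F : (Finset C → ℝ) → Set (Finset C)) : Prop :=
  ∀ π : Finset C → ℝ, IsProfile π → (∀ c c' : C, score p π c = score p π c') →
    F π = {K : Finset C | K.card = k}

/-- Positive scaling of a voting rule. -/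
def PosScaling {C : Type*} (F : (Finset C → ℝ) → Set (Finset C)) : Prop :=
  ∀ (π : Finset C → ℝ) (ℓ : ℝ), IsProfile π → 0 < ℓ → F (fun b => ℓ * π b) = F π

lemma wt_pos (p : ℝ≥0∞) {n : ℕ} (hn : 0 < n) : 0 < wt p n :=
  Real.rpow_pos_of_pos (by exact_mod_cast hn) _

section

variable {C : Type*} [Fintype C] [DecidableEq C]

lemma score_add (p : ℝ≥0∞) (π π' : Finset C → ℝ) (c : C) :
    score p (π + π') c = score p π c + score p π' c := by
  simp only [score, ← Finset.sum_add_distrib, Pi.add_apply]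
  refine Finset.sum_congr rfl fun x _ => ?_
  split_ifs <;> simp [add_div]

lemma score_theta (p : ℝ≥0∞) (b : Finset C) (c : C) :
    score p (theta p b) c = if c ∈ b then 1 else 0 := by
  rw [score, Finset.sum_eq_single b (fun x _ hx => by simp [theta, hx]) (by simp)]
  split_ifs with hc
  · rw [theta, if_pos rfl]
    exact div_self (wt_pos p (Finset.card_pos.mpr ⟨c, hc⟩)).ne'
  · rfl

lemma score_theta_add_theta (p : ℝ≥0∞) {b b' : Finset C} (hdisj : Disjoint b b') (c : C) :
    score p (theta p b + theta p b') c = if c ∈ b ∪ b' then 1 else 0 := by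
  rw [score_add, score_theta, score_theta]
  by_cases hc : c ∈ b
  · simp [hc, Finset.disjoint_left.mp hdisj hc]
  · simp [hc]

lemma Fkp_one_eq (p : ℝ≥0∞) (π : Finset C → ℝ) :
    Fkp 1 p π = {K | ∃ c, K = {c} ∧ ∀ c', score p π c' ≤ score p π c} := by
  ext K
  simp only [Fkp, Finset.card_eq_one, Set.mem_ofPred_eq]
  constructor
  · rintro ⟨⟨c, rfl⟩, hmax⟩
    exact ⟨c, rfl, fun c' => by simpa using hmax {c'} ⟨c', rfl⟩⟩
  · rintro ⟨c, rfl, hmax⟩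
    refine ⟨⟨c, rfl⟩, ?_⟩
    rintro _ ⟨c', rfl⟩
    simpa using hmax c'

lemma Fkp_one_eq_of_score_eq_indicator (p : ℝ≥0∞) (π : Finset C → ℝ) {s : Finset C}
    (hs : s.Nonempty)     (hscore : ∀ c, score p π c = if c ∈ s then 1 else 0) :
    Fkp 1 p π = {K | ∃ c ∈ s, K = {c}} := by
  obtain ⟨c₀, hc₀⟩ := hs
  rw [Fkp_one_eq]
  ext K
  simp only [Set.mem_ofPred_eq, hscore]
  constructor
  · rintro ⟨c, rfl, hmax⟩
    refine ⟨c, ?_, rfl⟩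
    by_contra hc
    exact absurd (hmax c₀) (by simp [hc₀, hc])
  · rintro ⟨c, hc, rfl⟩
    refine ⟨c, rfl, fun c' => ?_⟩
    split_ifs <;> norm_num

end

theorem stmt7_general {C : Type*} [Fintype C] [DecidableEq C]
    (p : ℝ≥0∞)
    (b b' : Finset C) (hb : b.Nonempty)
    (hdisj : Disjoint b b') :
    Fkp 1 p (theta p b + theta p b') = {K : Finset C | ∃ c ∈ b ∪ b', K = {c}} :=
  Fkp_one_eq_of_score_eq_indicator p _ (hb.mono Finset.subset_union_left)
    (score_theta_add_theta p hdisj)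

theorem stmt7 {C : Type*} [Fintype C] [DecidableEq C]
    (p : ℝ≥0∞) (hp : 1 ≤ p)
    (b b' : Finset C) (hb : b.Nonempty) (hb' : b'.Nonempty)
    (hdisj : Disjoint b b') :
    Fkp 1 p (theta p b + theta p b') = {K : Finset C | ∃ c ∈ b ∪ b', K = {c}} :=
  stmt7_general p b b' hb hdisj
end

section
/- F_{k,p} is utility maximizing with respect to U(b,K) = U_0 + (α|b∩K| + β|b∖K|)/|b|^{1/p} whenever α > β: for every profile π, F_{k,p}(π) = argmax over size-k committees K of Σ_b π(b)·U(b,K). -/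
open scoped ENNReal BigOperators

/-- Utility `U(b,K) = U₀ + (α|b∩K| + β|b∖K|)/|b|^{1/p}`. -/
noncomputable def util {C : Type*} [DecidableEq C] (p : ℝ≥0∞) (U₀ α β : ℝ)
    (b K : Finset C) : ℝ :=
  U₀ + (α * ((b ∩ K).card : ℝ) + β * ((b \ K).card : ℝ)) / wt p b.card

/-
The total utility of a committee `K` is affine in its total score: each ballot `b` contributes
`U₀ + β|b|/|b|^{1/p}` independently of `K`, plus `(α - β)|b ∩ K|/|b|^{1/p}`, and summing the latter
over ballots gives `(α - β)` times the total score of `K`. Since `α - β > 0`, both objectives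
have the same maximizers.
-/

section

variable {C : Type*} [DecidableEq C]

theorem util_eq (p : ℝ≥0∞) (U₀ α β : ℝ) (b K : Finset C) :
    util p U₀ α β b K =
      U₀ + β * b.card / wt p b.card + (α - β) * (b ∩ K).card / wt p b.card := by
  have hcard : ((b \ K).card : ℝ) = b.card - (b ∩ K).card := by
    rw [← Finset.card_sdiff_add_card_inter b K]
    push_cast
    ring
  rw [util, hcard]
  ring

variable [Fintype C]

theorem sum_score_eq (p : ℝ≥0∞) (π : Finset C → ℝ) (K : Finset C) :
    ∑ c ∈ K, score p π c = ∑ b : Finset C, ((b ∩ K).card : ℝ) * (π b / wt p b.card) := by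
  unfold score
  rw [Finset.sum_comm]
  refine Finset.sum_congr rfl fun b _ => ?_
  rw [Finset.sum_ite_mem, Finset.sum_const, nsmul_eq_mul, Finset.inter_comm]

theorem sum_mul_util_eq (p : ℝ≥0∞) (U₀ α β : ℝ) (π : Finset C → ℝ) (K : Finset C) :
    ∑ b : Finset C, π b * util p U₀ α β b K =
      ∑ b : Finset C, π b * (U₀ + β * b.card / wt p b.card) +
        (α - β) * ∑ c ∈ K, score p π c := by
  rw [sum_score_eq, Finset.mul_sum, ← Finset.sum_add_distrib]
  refine Finset.sum_congr rfl fun b _ => ?_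
  rw [util_eq]
  ring

end

theorem stmt9_general {C : Type*} [Fintype C] [DecidableEq C]
    (k : ℕ)
    (p : ℝ≥0∞)
    (U₀ α β : ℝ) (hαβ : β < α)
    (π : Finset C → ℕ) :
    Fkp k p (fun b => (π b : ℝ)) =
      {K : Finset C | K.card = k ∧ ∀ K' : Finset C, K'.card = k →
        ∑ b : Finset C, (π b : ℝ) * util p U₀ α β b K' ≤
          ∑ b : Finset C, (π b : ℝ) * util p U₀ α β b K} := by
  have hpos : 0 < α - β := sub_pos.mpr hαβ
  ext K
  simp only [Fkp, Set.mem_ofPred_eq, sum_mul_util_eq, add_le_add_iff_left,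
    mul_le_mul_iff_right₀ hpos]

theorem stmt9 {C : Type*} [Fintype C] [DecidableEq C]
    (k : ℕ) (hk : 1 ≤ k) (hkn : k ≤ Fintype.card C)
    (p : ℝ≥0∞) (hp : 1 ≤ p)
    (U₀ α β : ℝ) (hαβ : β < α)
    (π : Finset C → ℕ) (hπ0 : π ∅ = 0) :
    Fkp k p (fun b => (π b : ℝ)) =
      {K : Finset C | K.card = k ∧ ∀ K' : Finset C, K'.card = k →
        ∑ b : Finset C, (π b : ℝ) * util p U₀ α β b K' ≤
          ∑ b : Finset C, (π b : ℝ) * util p U₀ α β b K} :=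
  stmt9_general k p U₀ α β hαβ π
end

section
/- For any k ≥ 1, k,∞-approval voting is vote distance rationalizable with respect to the unanimity consensus class, using the metric d(v,v') = |v △ v'| (symmetric difference) on ballots: for every election E of m approval ballots, the set of size-k committees K minimizing min_{E'∈U_K} Σ_i d(v_i, v'_i) equals F_{k,∞}(E), and the minimal distance for committee K equals mk − Σ_{c∈K} s_∞(c), where s_∞(c) is the number of ballots containing c. -/
open scoped BigOperators symmDiff

/-- Approval score `s_∞(c)`: the number of ballots containing `c`. -/
def appScore {C : Type*} [DecidableEq C] {m : ℕ} (E : Fin m → Finset C) (c : C) : ℕ :=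
  (Finset.univ.filter (fun i => c ∈ E i)).card

/-- Minimal (symmetric-difference) distance from the election `E` to a unanimous
election in `U_K`, i.e. one all of whose ballots contain `K`. -/
noncomputable def minDistInfty {C : Type*} [Fintype C] [DecidableEq C] {m : ℕ}
    (E : Fin m → Finset C) (K : Finset C) : ℕ :=
  sInf {x : ℕ | ∃ E' : Fin m → Finset C,
    (∀ i, K ⊆ E' i ∧ (E' i).Nonempty) ∧ x = ∑ i, ((E i) ∆ (E' i)).card}

/-!
The cheapest way to make every ballot contain `K` is to add the missing members of `K`
to each ballot, at cost `∑ i, #(K \ E i)`; any other unanimous election differs from `E`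
at least in these elements. Since `#(K \ E i) + #(K ∩ E i) = #K` and
`∑ c ∈ K, s_∞(c) = ∑ i, #(K ∩ E i)` by double counting, the minimal distance and the
approval score of `K` add up to `m * #K`, so minimising one is maximising the other.
-/

open Finset

section

variable {C : Type*} [DecidableEq C] {m : ℕ}

theorem sum_appScore_eq_sum_card_inter (E : Fin m → Finset C) (K : Finset C) :
    ∑ c ∈ K, appScore E c = ∑ i, (K ∩ E i).card := by
  simp only [appScore, card_filter]
  rw [sum_comm]
  refine sum_congr rfl fun i _ => ?_
  rw [← card_filter, filter_mem_eq_inter]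

theorem card_sdiff_le_card_symmDiff {K A B : Finset C} (hKB : K ⊆ B) :
    (K \ A).card ≤ (A ∆ B).card :=
  card_le_card fun _ ha =>
    mem_symmDiff.mpr (Or.inr ⟨hKB (mem_sdiff.mp ha).1, (mem_sdiff.mp ha).2⟩)

theorem symmDiff_union_right_eq_sdiff (A K : Finset C) : A ∆ (A ∪ K) = K \ A := by
  ext a
  simp only [mem_symmDiff, mem_union, mem_sdiff]
  tauto

theorem minDistInfty_eq_sum_card_sdiff [Fintype C] (E : Fin m → Finset C)
    (hE : ∀ i, (E i).Nonempty) (K : Finset C) :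
    minDistInfty E K = ∑ i, (K \ E i).card := by
  have hunion : ∀ i, K ⊆ E i ∪ K ∧ (E i ∪ K).Nonempty := fun i =>
    ⟨subset_union_right, (hE i).mono subset_union_left⟩
  apply le_antisymm
  · refine Nat.sInf_le ⟨fun i => E i ∪ K, hunion, ?_⟩
    simp only [symmDiff_union_right_eq_sdiff]
  · refine le_csInf ⟨_, fun i => E i ∪ K, hunion, rfl⟩ ?_
    rintro x ⟨E', hE', rfl⟩
    exact sum_le_sum fun i _ => card_sdiff_le_card_symmDiff (hE' i).1

theorem minDistInfty_add_sum_appScore [Fintype C] (E : Fin m → Finset C)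
    (hE : ∀ i, (E i).Nonempty) (K : Finset C) :
    minDistInfty E K + ∑ c ∈ K, appScore E c = m * K.card := by
  rw [minDistInfty_eq_sum_card_sdiff E hE, sum_appScore_eq_sum_card_inter, ← sum_add_distrib]
  simp only [card_sdiff_add_card_inter, sum_const, card_univ, Fintype.card_fin, smul_eq_mul]

end

theorem Nat.le_iff_le_of_add_eq {a b c d n : ℕ} (h₁ : a + c = n) (h₂ : b + d = n) :
    a ≤ b ↔ d ≤ c := by
  omega

theorem stmt13_general {C : Type*} [Fintype C] [DecidableEq C]
    (k : ℕ)
    {m : ℕ} (E : Fin m → Finset C) (hE : ∀ i, (E i).Nonempty) :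
    (∀ K : Finset C, K.card = k →
      minDistInfty E K = m * k - ∑ c ∈ K, appScore E c) ∧
    {K : Finset C | K.card = k ∧ ∀ K' : Finset C, K'.card = k →
        minDistInfty E K ≤ minDistInfty E K'} =
      {K : Finset C | K.card = k ∧ ∀ K' : Finset C, K'.card = k →
        ∑ c ∈ K', appScore E c ≤ ∑ c ∈ K, appScore E c} := by
  have hsum : ∀ K : Finset C, K.card = k →
      minDistInfty E K + ∑ c ∈ K, appScore E c = m * k := fun K hK =>
    hK ▸ minDistInfty_add_sum_appScore E hE K
  refine ⟨fun K hK => Nat.eq_sub_of_add_eq (hsum K hK), ?_⟩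
  ext K
  exact and_congr_right fun hK => forall₂_congr fun K' hK' =>
    Nat.le_iff_le_of_add_eq (hsum K hK) (hsum K' hK')

theorem stmt13 {C : Type*} [Fintype C] [DecidableEq C]
    (k : ℕ) (hk : 1 ≤ k) (hkn : k ≤ Fintype.card C)
    {m : ℕ} (E : Fin m → Finset C) (hE : ∀ i, (E i).Nonempty) :
    (∀ K : Finset C, K.card = k →
      minDistInfty E K = m * k - ∑ c ∈ K, appScore E c) ∧
    {K : Finset C | K.card = k ∧ ∀ K' : Finset C, K'.card = k →
        minDistInfty E K ≤ minDistInfty E K'} =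
      {K : Finset C | K.card = k ∧ ∀ K' : Finset C, K'.card = k →
        ∑ c ∈ K', appScore E c ≤ ∑ c ∈ K, appScore E c} :=
  stmt13_general k E hE
end

section
/- Let d be a metric on ballots and d̂ the induced (sum) metric on elections of length m. If U = ⟨u_1,...,u_m⟩ minimizes d̂(E, ·) over a set S of elections containing U, and Ẽ is obtained from E = ⟨v_1,...,v_m⟩ by replacing v_ℓ with u_ℓ, then U also minimizes d̂(Ẽ, ·) over S. -/
open scoped BigOperators

/-- Induced (sum) distance between elections of length `m`. -/
noncomputable def dhat {I : Type*} [MetricSpace I] {m : ℕ} (E E' : Fin m → I) : ℝ :=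
  ∑ i, dist (E i) (E' i)

section

variable {I : Type*} [MetricSpace I] {m : ℕ}

lemma dhat_update (E V : Fin m → I) (ℓ : Fin m) (x : I) :
    dhat (Function.update E ℓ x) V = dhat E V - dist (E ℓ) (V ℓ) + dist x (V ℓ) := by
  unfold dhat
  rw [← Finset.add_sum_erase _ _ (Finset.mem_univ ℓ),
    ← Finset.add_sum_erase _ (fun i => dist (E i) (V i)) (Finset.mem_univ ℓ)]
  have h_off : ∀ i ∈ Finset.univ.erase ℓ,
      dist (Function.update E ℓ x i) (V i) = dist (E i) (V i) := fun i hi => by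
    rw [Function.update_of_ne (Finset.mem_erase.mp hi).1]
  rw [Finset.sum_congr rfl h_off, Function.update_self]
  ring

lemma dhat_update_apply_self (E U : Fin m → I) (ℓ : Fin m) :
    dhat (Function.update E ℓ (U ℓ)) U = dhat E U - dist (E ℓ) (U ℓ) := by
  rw [dhat_update, dist_self, add_zero]

lemma dhat_sub_dist_le_dhat_update (E U V : Fin m → I) (ℓ : Fin m) :
    dhat E V - dist (E ℓ) (U ℓ) ≤ dhat (Function.update E ℓ (U ℓ)) V := by
  rw [dhat_update]
  linarith [dist_triangle (E ℓ) (U ℓ) (V ℓ)]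

end

theorem stmt16_general {I : Type*} [MetricSpace I] {m : ℕ}
    (S : Set (Fin m → I)) (E U : Fin m → I)
    (hmin : ∀ V ∈ S, dhat E U ≤ dhat E V)
    (ℓ : Fin m) :
    ∀ V ∈ S, dhat (Function.update E ℓ (U ℓ)) U ≤ dhat (Function.update E ℓ (U ℓ)) V := by
  intro V hV
  calc dhat (Function.update E ℓ (U ℓ)) U = dhat E U - dist (E ℓ) (U ℓ) :=
        dhat_update_apply_self E U ℓ
    _ ≤ dhat E V - dist (E ℓ) (U ℓ) := by gcongr; exact hmin V hV
    _ ≤ dhat (Function.update E ℓ (U ℓ)) V := dhat_sub_dist_le_dhat_update E U V ℓ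

theorem stmt16 {I : Type*} [MetricSpace I] {m : ℕ}
    (S : Set (Fin m → I)) (E U : Fin m → I)
    (hU : U ∈ S) (hmin : ∀ V ∈ S, dhat E U ≤ dhat E V)
    (ℓ : Fin m) :
    ∀ V ∈ S, dhat (Function.update E ℓ (U ℓ)) U ≤ dhat (Function.update E ℓ (U ℓ)) V :=
  stmt16_general S E U hmin ℓ
end

section
/- For any p ∈ [1,∞) and any k > 1 (with at least k+1 candidates), k,p-approval voting is not vote distance rationalizable with respect to the unanimity consensus class: there is no metric d on ballots such that for every election E, F_{k,p}(E) equals the set of size-k committees K minimizing min_{E'∈U_K} Σ_i d(v_i, v'_i). -/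
open scoped BigOperators

/-- Score `s_p(c,E) = Σ_i 1[c∈v_i]/|v_i|^{1/p}` for finite `p`. -/
noncomputable def eScore {C : Type*} [DecidableEq C] (p : ℝ)
    {m : ℕ} (E : Fin m → Finset C) (c : C) : ℝ :=
  ∑ i, if c ∈ E i then (((E i).card : ℝ) ^ (1 / p))⁻¹ else 0

/-- Minimal distance (coordinatewise sum of `d`) from election `E` to an election in
`U_K`, i.e. one all of whose ballots are nonempty and contain `K`. -/
noncomputable def minDistTo {C : Type*} [Fintype C] [DecidableEq C]
    (d : Finset C → Finset C → ℝ) {m : ℕ} (E : Fin m → Finset C) (K : Finset C) : ℝ :=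
  sInf {x : ℝ | ∃ E' : Fin m → Finset C,
    (∀ i, K ⊆ E' i ∧ (E' i).Nonempty) ∧ x = ∑ i, d (E i) (E' i)}

/-- `d` is a metric on the set of nonempty ballots. -/
def IsBallotMetric {C : Type*} (d : Finset C → Finset C → ℝ) : Prop :=
  (∀ a b : Finset C, a.Nonempty → b.Nonempty → d a b = d b a) ∧
  (∀ a : Finset C, a.Nonempty → d a a = 0) ∧
  (∀ a b : Finset C, a.Nonempty → b.Nonempty → a ≠ b → 0 < d a b) ∧
  (∀ a b c : Finset C, a.Nonempty → b.Nonempty → c.Nonempty → d a c ≤ d a b + d b c)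

/-!
Fix `a ∉ K` and a committee `K₁ ∋ a` obtained from `K` by swapping one member for `a`; write
`D(v, X)` for the distance from the ballot `v` to the nearest ballot containing `X`, so that the
distance from an election to `U_X` is the sum of the `D(vᵢ, X)`, and let `r = k^{-1/p} < 1` be the
weight of a `k`-ballot. In the election with `⌈n r⌉` ballots `{a}` and `n` ballots `K`, the committee
`K₁` is a score winner, so it is at distance at most that of `K`; letting `n → ∞` gives
`D(K, K₁) ≤ r (D({a}, K) - D({a}, K₁))`. Conversely, if `u ⊇ K₁` realises `D({a}, K₁)`, then `K`
wins the election `(u, K)` because `|u|^{-1/p} ≤ r`, which together with the triangle inequality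
through `u` gives `D({a}, K) - D({a}, K₁) ≤ D(K, K₁)`. As `D(K, K₁) > 0`, these contradict `r < 1`.
-/

open Finset

lemma le_mul_of_forall_nat_mul_le_ceil_mul {c r g : ℝ} (hr : 0 ≤ r)
    (h : ∀ n : ℕ, n * c ≤ ⌈n * r⌉₊ * g) : c ≤ r * g := by
  have hbound : ∀ n : ℕ, n * (c - r * g) ≤ |g| := by
    intro n
    have hfrac₀ : 0 ≤ ⌈n * r⌉₊ - n * r := sub_nonneg.2 (Nat.le_ceil _)
    have hfrac₁ : ⌈n * r⌉₊ - n * r ≤ 1 := by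
      linarith [Nat.ceil_lt_add_one (by positivity : 0 ≤ n * r)]
    have : (⌈n * r⌉₊ - n * r) * g ≤ |g| :=
      calc (⌈n * r⌉₊ - n * r) * g ≤ (⌈n * r⌉₊ - n * r) * |g| :=
            mul_le_mul_of_nonneg_left (le_abs_self g) hfrac₀
        _ ≤ |g| := mul_le_of_le_one_left (abs_nonneg g) hfrac₁
    linarith [h n]
  by_contra! hlt
  obtain ⟨n, hn⟩ := exists_nat_gt (|g| / (c - r * g))
  rw [div_lt_iff₀ (sub_pos.2 hlt)] at hn
  linarith [hbound n]

lemma Finset.card_inter_add_card_inter_le {α : Type*} [DecidableEq α] {s t : Finset α}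
    (h : Disjoint s t) (X : Finset α) : #(X ∩ s) + #(X ∩ t) ≤ #X := by
  rw [← card_union_of_disjoint (h.mono inter_subset_right inter_subset_right)]
  exact card_le_card (union_subset inter_subset_left inter_subset_left)

def twoBlocks {α : Type*} (m₁ m₂ : ℕ) (v₁ v₂ : α) : Fin (m₁ + m₂) → α :=
  Fin.append (fun _ => v₁) (fun _ => v₂)

section TwoBlocks

variable {α : Type*} {m₁ m₂ : ℕ} {v₁ v₂ : α}

lemma forall_twoBlocks {P : α → Prop} (h₁ : P v₁) (h₂ : P v₂) :
    ∀ i, P (twoBlocks m₁ m₂ v₁ v₂ i) :=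
  Fin.addCases (fun _ => by simpa [twoBlocks]) (fun _ => by simpa [twoBlocks])

lemma sum_twoBlocks {M : Type*} [AddCommMonoid M] (g : α → M) :
    ∑ i, g (twoBlocks m₁ m₂ v₁ v₂ i) = m₁ • g v₁ + m₂ • g v₂ := by
  simp [twoBlocks, Fin.sum_univ_add]

end TwoBlocks

section Election

variable {C : Type*}

lemma IsBallotMetric.nonneg {d : Finset C → Finset C → ℝ} (hd : IsBallotMetric d)
    {v w : Finset C} (hv : v.Nonempty) (hw : w.Nonempty) : 0 ≤ d v w := by
  rcases eq_or_ne v w with rfl | hvw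
  · exact (hd.2.1 v hv).ge
  · exact (hd.2.2.1 v w hv hw hvw).le

noncomputable def ballotDist (d : Finset C → Finset C → ℝ) (v X : Finset C) : ℝ :=
  sInf (d v '' {w | X ⊆ w ∧ w.Nonempty})

noncomputable def approvalWeight (p : ℝ) (v : Finset C) : ℝ := ((#v : ℝ) ^ (1 / p))⁻¹

section ApprovalWeight

variable {p : ℝ}

lemma approvalWeight_nonneg (v : Finset C) : 0 ≤ approvalWeight p v := by
  unfold approvalWeight; positivity

@[simp]
lemma approvalWeight_singleton (a : C) : approvalWeight p {a} = 1 := by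
  simp [approvalWeight]

lemma approvalWeight_anti (hp : 0 < p) {v w : Finset C} (hv : v.Nonempty) (hvw : #v ≤ #w) :
    approvalWeight p w ≤ approvalWeight p v :=
  inv_anti₀ (by have := hv.card_pos; positivity)
    (Real.rpow_le_rpow (Nat.cast_nonneg _) (by exact_mod_cast hvw) (by positivity))

lemma approvalWeight_lt_one (hp : 0 < p) {v : Finset C} (hv : 1 < #v) :
    approvalWeight p v < 1 :=
  inv_lt_one_of_one_lt₀ (Real.one_lt_rpow (by exact_mod_cast hv) (by positivity))

end ApprovalWeight

section BallotDist

variable [Fintype C] {d : Finset C → Finset C → ℝ} {v w X : Finset C}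

lemma ballotDist_le (hXw : X ⊆ w) (hw : w.Nonempty) : ballotDist d v X ≤ d v w :=
  csInf_le (Set.toFinite _).bddBelow ⟨w, ⟨hXw, hw⟩, rfl⟩

lemma exists_ballotDist_eq (d : Finset C → Finset C → ℝ) (v : Finset C) (hX : X.Nonempty) :
    ∃ w, X ⊆ w ∧ w.Nonempty ∧ ballotDist d v X = d v w := by
  have hne : {w : Finset C | X ⊆ w ∧ w.Nonempty}.Nonempty := ⟨X, subset_rfl, hX⟩
  obtain ⟨w, ⟨hXw, hw⟩, hdw⟩ := (hne.image (d v)).csInf_mem (Set.toFinite _)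
  exact ⟨w, hXw, hw, hdw.symm⟩

lemma ballotDist_nonneg (hd : IsBallotMetric d) (hv : v.Nonempty) (hX : X.Nonempty) :
    0 ≤ ballotDist d v X := by
  obtain ⟨w, -, hw, hdw⟩ := exists_ballotDist_eq d v hX
  exact hdw ▸ hd.nonneg hv hw

lemma ballotDist_eq_zero_of_subset (hd : IsBallotMetric d) (hX : X.Nonempty) (hXv : X ⊆ v) :
    ballotDist d v X = 0 := by
  have hv : v.Nonempty := hX.mono hXv
  exact le_antisymm ((ballotDist_le hXv hv).trans_eq (hd.2.1 v hv))
    (ballotDist_nonneg hd hv hX)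

lemma ballotDist_pos (hd : IsBallotMetric d) (hv : v.Nonempty) (hX : X.Nonempty)
    (hXv : ¬ X ⊆ v) : 0 < ballotDist d v X := by
  obtain ⟨w, hXw, hw, hdw⟩ := exists_ballotDist_eq d v hX
  exact hdw ▸ hd.2.2.1 v w hv hw (by rintro rfl; exact hXv hXw)

lemma ballotDist_le_add (hd : IsBallotMetric d) (hv : v.Nonempty) (hw : w.Nonempty)
    (hX : X.Nonempty) : ballotDist d v X ≤ d v w + ballotDist d w X := by
  obtain ⟨u, hXu, hu, hdu⟩ := exists_ballotDist_eq d w hX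
  rw [hdu]
  exact (ballotDist_le hXu hu).trans (hd.2.2.2 v w u hv hw hu)

end BallotDist

section Score

variable [DecidableEq C]

lemma sum_eScore (p : ℝ) {m : ℕ} (E : Fin m → Finset C) (X : Finset C) :
    ∑ c ∈ X, eScore p E c = ∑ i, approvalWeight p (E i) * #(X ∩ E i) := by
  unfold eScore
  rw [sum_comm]
  refine sum_congr rfl fun i _ => ?_
  rw [← sum_filter, filter_mem_eq_inter, sum_const, nsmul_eq_mul, mul_comm, approvalWeight]

lemma sum_eScore_twoBlocks (p : ℝ) (m₁ m₂ : ℕ) (v₁ v₂ X : Finset C) :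
    ∑ c ∈ X, eScore p (twoBlocks m₁ m₂ v₁ v₂) c =
      m₁ * (approvalWeight p v₁ * #(X ∩ v₁)) + m₂ * (approvalWeight p v₂ * #(X ∩ v₂)) := by
  rw [sum_eScore, sum_twoBlocks (fun v => approvalWeight p v * #(X ∩ v)), nsmul_eq_mul,
    nsmul_eq_mul]

def IsScoreWinner (k : ℕ) (p : ℝ) {m : ℕ} (E : Fin m → Finset C) (K : Finset C) : Prop :=
  #K = k ∧ ∀ K' : Finset C, #K' = k → ∑ c ∈ K', eScore p E c ≤ ∑ c ∈ K, eScore p E c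

section SwapScores

variable {k : ℕ} {p : ℝ} {a : C} {K K₁ : Finset C}

lemma isScoreWinner_twoBlocks_singleton (hK : #K = k) (hK₁ : #K₁ = k) (haK₁ : a ∈ K₁)
    (haK : a ∉ K) (hK₁K : K₁.erase a ⊆ K) {m₁ m₂ : ℕ} (hm : m₂ * approvalWeight p K ≤ m₁) :
    IsScoreWinner k p (twoBlocks m₁ m₂ {a} K) K₁ := by
  refine ⟨hK₁, fun X hX => ?_⟩
  simp only [sum_eScore_twoBlocks, approvalWeight_singleton, one_mul]
  have hs : 0 ≤ m₂ * approvalWeight p K := by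
    have := approvalWeight_nonneg (p := p) K; positivity
  have hX : #(X ∩ {a}) + #(X ∩ K) ≤ k :=
    hX ▸ card_inter_add_card_inter_le (disjoint_singleton_left.2 haK) X
  have hXa : #(X ∩ {a}) ≤ 1 := (card_le_card inter_subset_right).trans_eq (card_singleton a)
  have hK₁a : #(K₁ ∩ {a}) = 1 := by rw [inter_singleton_of_mem haK₁, card_singleton]
  have hK₁K : k ≤ #(K₁ ∩ K) + 1 := by
    have := card_le_card (subset_inter (erase_subset a K₁) hK₁K)
    rw [card_erase_of_mem haK₁] at this
    omega
  rw [hK₁a, Nat.cast_one, mul_one]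
  rify at hX hXa hK₁K
  nlinarith [mul_le_mul_of_nonneg_left hX hs, mul_le_mul_of_nonneg_left hK₁K hs,
    mul_le_mul_of_nonneg_left hXa (sub_nonneg.2 hm)]

lemma isScoreWinner_twoBlocks_superset (hp : 0 < p) (hk : 0 < k) (hK : #K = k) (hK₁ : #K₁ = k)
    (hK₁K : K₁.erase a ⊆ K) {u : Finset C} (hu : K₁ ⊆ u) :
    IsScoreWinner k p (twoBlocks 1 1 u K) K := by
  refine ⟨hK, fun X hX => ?_⟩
  simp only [sum_eScore_twoBlocks, Nat.cast_one, one_mul]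
  by_cases hXK_eq : X = K
  · rw [hXK_eq]
  have hwr : approvalWeight p u ≤ approvalWeight p K :=
    approvalWeight_anti hp (card_pos.1 (hK ▸ hk)) (hK ▸ hK₁ ▸ card_le_card hu)
  have hw := approvalWeight_nonneg (p := p) u
  have hXu : #(X ∩ u) ≤ k := hX ▸ card_le_card inter_subset_left
  have hXK : #(X ∩ K) + 1 ≤ k := by
    have hne : #(X ∩ K) ≠ #K := fun h => by
      have hKX : K ⊆ X := inter_eq_right.1 (eq_of_subset_of_card_le inter_subset_right h.ge)
      exact hXK_eq (eq_of_subset_of_card_le hKX (hX.trans hK.symm).le).symm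
    have := card_le_card (inter_subset_right (s₁ := X) (s₂ := K))
    omega
  have hKu : k ≤ #(K ∩ u) + 1 := by
    have := card_le_card (subset_inter hK₁K ((erase_subset a K₁).trans hu))
    have := pred_card_le_card_erase (s := K₁) (a := a)
    omega
  rw [inter_self, hK]
  rify at hXu hXK hKu
  nlinarith [mul_le_mul_of_nonneg_left hXu hw, mul_le_mul_of_nonneg_left hKu hw,
    mul_le_mul_of_nonneg_left hXK (approvalWeight_nonneg (p := p) K)]

end SwapScores

end Score

section Distance

variable [Fintype C] [DecidableEq C]

lemma minDistTo_eq_sum_ballotDist (d : Finset C → Finset C → ℝ) {m : ℕ} (E : Fin m → Finset C)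
    {X : Finset C} (hX : X.Nonempty) : minDistTo d E X = ∑ i, ballotDist d (E i) X := by
  have hlower : ∑ i, ballotDist d (E i) X ∈ lowerBounds {x : ℝ | ∃ E' : Fin m → Finset C,
      (∀ i, X ⊆ E' i ∧ (E' i).Nonempty) ∧ x = ∑ i, d (E i) (E' i)} := by
    rintro _ ⟨E', hE', rfl⟩
    exact sum_le_sum fun i _ => ballotDist_le (hE' i).1 (hE' i).2
  choose w hXw hw hdw using fun i => exists_ballotDist_eq d (E i) hX
  have hw_mem : ∑ i, ballotDist d (E i) X ∈ {x : ℝ | ∃ E' : Fin m → Finset C,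
      (∀ i, X ⊆ E' i ∧ (E' i).Nonempty) ∧ x = ∑ i, d (E i) (E' i)} :=
    ⟨w, fun i => ⟨hXw i, hw i⟩, sum_congr rfl fun i _ => hdw i⟩
  exact le_antisymm (csInf_le ⟨_, hlower⟩ hw_mem) (le_csInf ⟨_, hw_mem⟩ hlower)

lemma minDistTo_twoBlocks (d : Finset C → Finset C → ℝ) (m₁ m₂ : ℕ) (v₁ v₂ : Finset C)
    {X : Finset C} (hX : X.Nonempty) :
    minDistTo d (twoBlocks m₁ m₂ v₁ v₂) X = m₁ * ballotDist d v₁ X + m₂ * ballotDist d v₂ X := by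
  rw [minDistTo_eq_sum_ballotDist d _ hX, sum_twoBlocks (ballotDist d · X), nsmul_eq_mul,
    nsmul_eq_mul]

def IsDistWinner (d : Finset C → Finset C → ℝ) (k : ℕ) {m : ℕ} (E : Fin m → Finset C)
    (K : Finset C) : Prop :=
  #K = k ∧ ∀ K' : Finset C, #K' = k → minDistTo d E K ≤ minDistTo d E K'

def ScoreWinnersAreDistWinners (d : Finset C → Finset C → ℝ) (k : ℕ) (p : ℝ) : Prop :=
  ∀ (m : ℕ) (E : Fin m → Finset C), (∀ i, (E i).Nonempty) →
    ∀ K, IsScoreWinner k p E K → IsDistWinner d k E K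

lemma exists_swap_committees {k : ℕ} (hk : 0 < k) (hn : k + 1 ≤ Fintype.card C) :
    ∃ (a : C) (K K₁ : Finset C), #K = k ∧ #K₁ = k ∧ a ∈ K₁ ∧ a ∉ K ∧ K₁.erase a ⊆ K := by
  obtain ⟨B, -, hB⟩ := exists_subset_card_eq (hn.trans_eq card_univ.symm)
  obtain ⟨a, ha⟩ := card_pos.1 (by omega : 0 < #B)
  obtain ⟨o, ho⟩ := card_pos.1 (by rw [card_erase_of_mem ha]; omega : 0 < #(B.erase a))
  refine ⟨a, B.erase a, B.erase o, ?_, ?_, mem_erase.2 ⟨(ne_of_mem_erase ho).symm, ha⟩,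
    notMem_erase a B, erase_right_comm (s := B) ▸ erase_subset o _⟩
  · rw [card_erase_of_mem ha]; omega
  · rw [card_erase_of_mem (mem_of_mem_erase ho)]; omega

section SwapDistances

variable {d : Finset C → Finset C → ℝ} {k : ℕ} {p : ℝ} {a : C} {K K₁ : Finset C}

lemma ballotDist_le_approvalWeight_mul_sub (hwin : ScoreWinnersAreDistWinners d k p)
    (hd : IsBallotMetric d) (hk : 0 < k) (hK : #K = k) (hK₁ : #K₁ = k) (haK₁ : a ∈ K₁)
    (haK : a ∉ K) (hK₁K : K₁.erase a ⊆ K) :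
    ballotDist d K K₁ ≤ approvalWeight p K * (ballotDist d {a} K - ballotDist d {a} K₁) := by
  have hKne : K.Nonempty := card_pos.1 (hK ▸ hk)
  have hblock : ∀ m₁ m₂ : ℕ, m₂ * approvalWeight p K ≤ m₁ →
      m₂ * ballotDist d K K₁ ≤ m₁ * (ballotDist d {a} K - ballotDist d {a} K₁) := by
    intro m₁ m₂ hm
    have h := (hwin _ (twoBlocks m₁ m₂ {a} K) (forall_twoBlocks (singleton_nonempty a) hKne) K₁
      (isScoreWinner_twoBlocks_singleton hK hK₁ haK₁ haK hK₁K hm)).2 K hK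
    rw [minDistTo_twoBlocks d _ _ _ _ ⟨a, haK₁⟩, minDistTo_twoBlocks d _ _ _ _ hKne,
      ballotDist_eq_zero_of_subset hd hKne subset_rfl] at h
    linarith
  exact le_mul_of_forall_nat_mul_le_ceil_mul (approvalWeight_nonneg K)
    fun n => hblock _ n (Nat.le_ceil _)

lemma sub_ballotDist_le_ballotDist (hwin : ScoreWinnersAreDistWinners d k p)
    (hd : IsBallotMetric d) (hp : 0 < p) (hk : 0 < k) (hK : #K = k) (hK₁ : #K₁ = k)
    (hK₁K : K₁.erase a ⊆ K) :
    ballotDist d {a} K - ballotDist d {a} K₁ ≤ ballotDist d K K₁ := by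
  have hKne : K.Nonempty := card_pos.1 (hK ▸ hk)
  have hK₁ne : K₁.Nonempty := card_pos.1 (hK₁ ▸ hk)
  obtain ⟨u, hK₁u, hu, hdu⟩ := exists_ballotDist_eq d {a} hK₁ne
  have h := (hwin _ (twoBlocks 1 1 u K) (forall_twoBlocks hu hKne) K
    (isScoreWinner_twoBlocks_superset hp hk hK hK₁ hK₁K hK₁u)).2 K₁ hK₁
  rw [minDistTo_twoBlocks d _ _ _ _ hKne, minDistTo_twoBlocks d _ _ _ _ hK₁ne,
    ballotDist_eq_zero_of_subset hd hKne subset_rfl,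
    ballotDist_eq_zero_of_subset hd hK₁ne hK₁u, Nat.cast_one] at h
  have htri := ballotDist_le_add hd (singleton_nonempty a) hu hKne
  linarith

end SwapDistances

end Distance

end Election

/-- For `p < ∞` and `k > 1`, `k,p`-approval voting is not vote distance rationalizable
with respect to the unanimity consensus class. -/
theorem stmt17 {C : Type*} [Fintype C] [DecidableEq C]
    (k : ℕ) (hk : 1 < k) (hn : k + 1 ≤ Fintype.card C)
    (p : ℝ) (hp : 1 ≤ p) :
    ¬ ∃ d : Finset C → Finset C → ℝ, IsBallotMetric d ∧
      ∀ (m : ℕ) (E : Fin m → Finset C), (∀ i, (E i).Nonempty) →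
        {K : Finset C | K.card = k ∧ ∀ K' : Finset C, K'.card = k →
            ∑ c ∈ K', eScore p E c ≤ ∑ c ∈ K, eScore p E c} =
          {K : Finset C | K.card = k ∧ ∀ K' : Finset C, K'.card = k →
            minDistTo d E K ≤ minDistTo d E K'} := by
  rintro ⟨d, hd, hrat⟩
  have hwin : ScoreWinnersAreDistWinners d k p := fun m E hE K hK => (hrat m E hE).subset hK
  have hp₀ : 0 < p := by linarith
  have hk₀ : 0 < k := by omega
  obtain ⟨a, K, K₁, hK, hK₁, haK₁, haK, hK₁K⟩ := exists_swap_committees hk₀ hn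
  have hpos : 0 < ballotDist d K K₁ :=
    ballotDist_pos hd (card_pos.1 (hK ▸ hk₀)) ⟨a, haK₁⟩ fun h => haK (h haK₁)
  have hr : approvalWeight p K < 1 := approvalWeight_lt_one hp₀ (hK ▸ hk)
  have hupper := ballotDist_le_approvalWeight_mul_sub hwin hd hk₀ hK hK₁ haK₁ haK hK₁K
  have hlower := sub_ballotDist_le_ballotDist hwin hd hp₀ hk₀ hK hK₁ hK₁K
  nlinarith [mul_le_mul_of_nonneg_left hlower (approvalWeight_nonneg (p := p) K)]
end
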